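/- arXiv:1711.03711 — 9 statements merged into one kernel-verified Lean document; each statement's English description precedes it below -/
import Mathlib

section
/- Let G be an undirected weighted connected graph with incidence matrix B, diagonal positive definite weight matrix 𝒜, and Laplacian L = B𝒜Bᵀ. Define 𝒫 = Bᵀ L† B𝒜, where L† is the Moore–Penrose pseudoinverse of L. Then 𝒫 is the oblique projection onto Im(Bᵀ) parallel to Ker(B𝒜): 𝒫 is idempotent, 𝒫x = x for all x ∈ Im(Bᵀ), and 𝒫x = 0 for all x ∈ Ker(B𝒜). -/
open Matrix

/-- With `L = B𝒜Bᵀ` and `L†` its Moore–Penrose pseudoinverse (characterized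
by the four Penrose conditions), the matrix `𝒫 = Bᵀ L† B𝒜` is the oblique projection onto
`Im(Bᵀ)` parallel to `Ker(B𝒜)`: it is idempotent, acts as the identity on `Im(Bᵀ)`, and
vanishes on `Ker(B𝒜)`. -/
theorem cutset_projection_is_oblique_projection
    (n m : ℕ) (B : Matrix (Fin n) (Fin m) ℝ) (a : Fin m → ℝ)
    (ha : ∀ e, 0 < a e)
    (hconn : ∀ x : Fin n → ℝ, Bᵀ.mulVec x = 0 ↔ ∃ c : ℝ, x = fun _ => c)
    (L Ldag : Matrix (Fin n) (Fin n) ℝ)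
    (hL : L = B * Matrix.diagonal a * Bᵀ)
    (hmp1 : L * Ldag * L = L) (hmp2 : Ldag * L * Ldag = Ldag)
    (hmp3 : (L * Ldag)ᵀ = L * Ldag) (hmp4 : (Ldag * L)ᵀ = Ldag * L)
    (P : Matrix (Fin m) (Fin m) ℝ)
    (hP : P = Bᵀ * Ldag * B * Matrix.diagonal a) :
    P * P = P ∧
    (∀ x : Fin m → ℝ, (∃ ξ : Fin n → ℝ, x = Bᵀ.mulVec ξ) → P.mulVec x = x) ∧
    (∀ x : Fin m → ℝ, (B * Matrix.diagonal a).mulVec x = 0 → P.mulVec x = 0) := by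
  -- kernel of L is contained in kernel of Bᵀ
  have key : ∀ x : Fin n → ℝ, L.mulVec x = 0 → Bᵀ.mulVec x = 0 := by
    intro x hx
    set y : Fin m → ℝ := Bᵀ.mulVec x with hy
    have h0 : x ⬝ᵥ L.mulVec x = 0 := by rw [hx]; simp
    have h1 : x ⬝ᵥ L.mulVec x = ∑ e, a e * y e ^ 2 := by
      rw [hL, ← Matrix.mulVec_mulVec, ← Matrix.mulVec_mulVec, Matrix.dotProduct_mulVec,
        ← Matrix.mulVec_transpose]
      simp only [dotProduct, Matrix.mulVec_diagonal]
      apply Finset.sum_congr rfl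
      intro e _
      simp only [← hy]
      ring
    have hsum : ∑ e, a e * y e ^ 2 = 0 := by rw [← h1, h0]
    have hall : ∀ e ∈ Finset.univ, a e * y e ^ 2 = 0 := by
      rw [← Finset.sum_eq_zero_iff_of_nonneg]
      · exact hsum
      · intro e _
        exact mul_nonneg (ha e).le (sq_nonneg _)
    funext e
    have := hall e (Finset.mem_univ e)
    have hae := (ha e).ne'
    have : y e ^ 2 = 0 := by
      rcases mul_eq_zero.mp this with h | h
      · exact absurd h hae
      · exact h
    simpa [hy] using pow_eq_zero_iff (two_ne_zero) |>.mp this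
  -- Bᵀ * Ldag * L = Bᵀ
  have hK : Bᵀ * Ldag * L = Bᵀ := by
    have hLM : L * (1 - Ldag * L) = 0 := by
      rw [Matrix.mul_sub, Matrix.mul_one, ← Matrix.mul_assoc, hmp1, sub_self]
    have hBM : Bᵀ * (1 - Ldag * L) = 0 := by
      ext e j
      have hcol : L.mulVec ((1 - Ldag * L).mulVec (Pi.single j 1)) = 0 := by
        rw [Matrix.mulVec_mulVec, hLM, Matrix.zero_mulVec]
      have := key _ hcol
      have h2 : (Bᵀ * (1 - Ldag * L)).mulVec (Pi.single j 1) = 0 := by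
        rw [← Matrix.mulVec_mulVec, this]
      have h3 := congrFun h2 e
      simpa using h3
    rw [Matrix.mul_sub, Matrix.mul_one] at hBM
    rw [Matrix.mul_assoc]
    exact (sub_eq_zero.mp hBM).symm
  refine ⟨?_, ?_, ?_⟩
  · -- idempotent
    calc P * P
        = Bᵀ * Ldag * (B * Matrix.diagonal a * Bᵀ) * (Ldag * (B * Matrix.diagonal a)) := by
          rw [hP]; simp only [Matrix.mul_assoc]
      _ = Bᵀ * Ldag * L * (Ldag * (B * Matrix.diagonal a)) := by rw [← hL]
      _ = Bᵀ * (Ldag * L * Ldag) * (B * Matrix.diagonal a) := by simp only [Matrix.mul_assoc]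
      _ = Bᵀ * Ldag * (B * Matrix.diagonal a) := by rw [hmp2]
      _ = P := by rw [hP]; simp only [Matrix.mul_assoc]
  · rintro x ⟨ξ, rfl⟩
    have hPB : P * Bᵀ = Bᵀ := by
      calc P * Bᵀ = Bᵀ * Ldag * (B * Matrix.diagonal a * Bᵀ) := by
            rw [hP]; simp only [Matrix.mul_assoc]
        _ = Bᵀ * Ldag * L := by rw [← hL]
        _ = Bᵀ := hK
    rw [Matrix.mulVec_mulVec, hPB]
  · intro x hx
    have : P = Bᵀ * Ldag * (B * Matrix.diagonal a) := by rw [hP, Matrix.mul_assoc]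
    rw [this, ← Matrix.mulVec_mulVec, hx, Matrix.mulVec_zero]
end

section
/- If G is an undirected weighted connected acyclic graph (a tree) with incidence matrix B, weight matrix 𝒜 and Laplacian L = B𝒜Bᵀ, then the cutset projection 𝒫 = Bᵀ L† B𝒜 equals the identity matrix I_{n−1}. -/
open Matrix

/-- For a connected acyclic graph (a tree) on `n` nodes, with `m = n − 1`
edges, incidence matrix `B ∈ ℝ^{n×(n−1)}`, diagonal positive weight matrix `𝒜`, Laplacian
`L = B𝒜Bᵀ` and Moore–Penrose pseudoinverse `L†`, the cutset projection
`𝒫 = Bᵀ L† B𝒜` equals the identity matrix `I_{n−1}`. -/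
theorem cutset_projection_tree
    (n : ℕ) (B : Matrix (Fin n) (Fin (n - 1)) ℝ) (a : Fin (n - 1) → ℝ)
    (ha : ∀ e, 0 < a e)
    (hconn : ∀ x : Fin n → ℝ, Bᵀ.mulVec x = 0 ↔ ∃ c : ℝ, x = fun _ => c)
    (L Ldag : Matrix (Fin n) (Fin n) ℝ)
    (hL : L = B * Matrix.diagonal a * Bᵀ)
    (hmp1 : L * Ldag * L = L) (hmp2 : Ldag * L * Ldag = Ldag)
    (hmp3 : (L * Ldag)ᵀ = L * Ldag) (hmp4 : (Ldag * L)ᵀ = Ldag * L) :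
    Bᵀ * Ldag * B * Matrix.diagonal a = 1 := by
  rcases Nat.eq_zero_or_pos n with hn | hn
  · subst hn
    ext i j
    exact absurd i.2 (by omega)
  -- Step A: the kernel of `L` is contained in the kernel of `Bᵀ`
  have kerA : ∀ y : Fin n → ℝ, L.mulVec y = 0 → Bᵀ.mulVec y = 0 := by
    intro y hy
    have h0 : ∑ e, Bᵀ.mulVec y e * (Matrix.diagonal a).mulVec (Bᵀ.mulVec y) e = 0 := by
      have h1 : y ⬝ᵥ L.mulVec y = 0 := by rw [hy, dotProduct_zero]
      rw [hL, ← Matrix.mulVec_mulVec, ← Matrix.mulVec_mulVec,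
        Matrix.dotProduct_mulVec, ← Matrix.mulVec_transpose] at h1
      simpa [dotProduct] using h1
    have hterm : ∀ e ∈ Finset.univ,
        (0:ℝ) ≤ Bᵀ.mulVec y e * (Matrix.diagonal a).mulVec (Bᵀ.mulVec y) e := by
      intro e _
      rw [Matrix.mulVec_diagonal]
      have : Bᵀ.mulVec y e * (a e * Bᵀ.mulVec y e) = a e * (Bᵀ.mulVec y e)^2 := by ring
      rw [this]
      exact mul_nonneg (le_of_lt (ha e)) (sq_nonneg _)
    funext e
    have hz := (Finset.sum_eq_zero_iff_of_nonneg hterm).mp h0 e (Finset.mem_univ e)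
    rw [Matrix.mulVec_diagonal] at hz
    have h2 : a e * (Bᵀ.mulVec y e * Bᵀ.mulVec y e) = 0 := by linear_combination hz
    rcases mul_eq_zero.mp h2 with h | h
    · exact absurd h (ne_of_gt (ha e))
    · simpa using mul_self_eq_zero.mp h
  -- Step B : Bᵀ * Ldag * L = Bᵀ
  have hLproj : L * (1 - Ldag * L) = 0 := by
    rw [mul_sub, mul_one, ← mul_assoc, hmp1, sub_self]
  have hBL : Bᵀ * (1 - Ldag * L) = 0 := by
    ext j k
    have hv : L.mulVec (fun i => (1 - Ldag * L) i k) = 0 := by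
      funext i
      have h := congrFun (congrFun hLproj i) k
      simpa [Matrix.mul_apply, Matrix.mulVec, dotProduct] using h
    have h2 := congrFun (kerA _ hv) j
    simpa [Matrix.mul_apply, Matrix.mulVec, dotProduct] using h2
  have hBL' : Bᵀ * Ldag * L = Bᵀ := by
    have h := hBL
    rw [Matrix.mul_sub, Matrix.mul_one, sub_eq_zero] at h
    rw [Matrix.mul_assoc]
    exact h.symm
  -- Step: P * Bᵀ = Bᵀ where P = Bᵀ * Ldag * B * diagonal a
  have key : Bᵀ * Ldag * B * Matrix.diagonal a * Bᵀ = Bᵀ := by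
    rw [Matrix.mul_assoc (Bᵀ * Ldag * B), Matrix.mul_assoc (Bᵀ * Ldag),
      ← Matrix.mul_assoc B, ← hL, hBL']
  have hPsub : (Bᵀ * Ldag * B * Matrix.diagonal a - 1) * Bᵀ = 0 := by
    rw [Matrix.sub_mul, Matrix.one_mul, key, sub_self]
  -- Step C : B has trivial kernel (full column rank)
  have hone : (fun _ => (1:ℝ) : Fin n → ℝ) ≠ 0 := by
    intro h
    have := congrFun h ⟨0, hn⟩
    simp at this
  have hker : LinearMap.ker (Bᵀ.mulVecLin) =
      Submodule.span ℝ {(fun _ => (1:ℝ) : Fin n → ℝ)} := by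
    ext x
    rw [LinearMap.mem_ker, Matrix.mulVecLin_apply, hconn, Submodule.mem_span_singleton]
    constructor
    · rintro ⟨c, rfl⟩; exact ⟨c, by funext i; simp⟩
    · rintro ⟨c, rfl⟩; exact ⟨c, by funext i; simp⟩
  have hrankT : Bᵀ.rank = n - 1 := by
    have h1 := LinearMap.finrank_range_add_finrank_ker (Bᵀ.mulVecLin)
    rw [hker, finrank_span_singleton hone] at h1
    have h2 : Module.finrank ℝ (Fin n → ℝ) = n := Module.finrank_fin_fun ℝ
    have h3 : Bᵀ.rank = Module.finrank ℝ (LinearMap.range Bᵀ.mulVecLin) := rfl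
    omega
  have hrankB : B.rank = n - 1 := by
    rw [← Matrix.rank_transpose B]
    exact hrankT
  have hkerB : ∀ x : Fin (n-1) → ℝ, B.mulVec x = 0 → x = 0 := by
    intro x hx
    have h1 := LinearMap.finrank_range_add_finrank_ker (B.mulVecLin)
    have h2 : Module.finrank ℝ (Fin (n-1) → ℝ) = n - 1 := Module.finrank_fin_fun ℝ
    have h3 : Module.finrank ℝ (LinearMap.range B.mulVecLin) = n - 1 := hrankB
    have h4 : Module.finrank ℝ (LinearMap.ker B.mulVecLin) = 0 := by omega
    have h5 : LinearMap.ker B.mulVecLin = ⊥ := Submodule.finrank_eq_zero.mp h4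
    have hx' : x ∈ LinearMap.ker B.mulVecLin := by
      rw [LinearMap.mem_ker, Matrix.mulVecLin_apply]; exact hx
    rw [h5] at hx'
    simpa using hx'
  -- a matrix-level cancellation lemma from injectivity
  have hcancel : ∀ M : Matrix (Fin (n-1)) (Fin (n-1)) ℝ, B * M = 0 → M = 0 := by
    intro M hM
    ext i k
    have hcol : B.mulVec (fun r => M r k) = 0 := by
      funext i'
      have h := congrFun (congrFun hM i') k
      simpa [Matrix.mul_apply, Matrix.mulVec, dotProduct] using h
    simpa using congrFun (hkerB _ hcol) i
  -- Conclude
  have hfinal : B * (Bᵀ * Ldag * B * Matrix.diagonal a - 1)ᵀ = 0 := by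
    have h := congrArg Matrix.transpose hPsub
    rwa [Matrix.transpose_mul, Matrix.transpose_transpose, Matrix.transpose_zero] at h
  have hzero := Matrix.transpose_eq_zero.mp (hcancel _ hfinal)
  exact sub_eq_zero.mp hzero
end

section
/- If G is the unweighted complete graph on n nodes with incidence matrix B, then the cutset projection is 𝒫 = (1/n) Bᵀ B, and its ∞-norm is ‖𝒫‖_∞ = 2(n−1)/n. -/
open Matrix

/-!
The complete graph has Laplacian `L = B Bᵀ = n I - J`, and the columns of `B` sum to zero, so
`L B = n B` and `Bᵀ L = n Bᵀ`. For any `L⁻` with `L L⁻ L = L` this gives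
`n² Bᵀ L⁻ B = Bᵀ L L⁻ L B = Bᵀ L B = n Bᵀ B`.
For the row sums, `M = Bᵀ B` is symmetric with `M² = n M`, `M e e = 2` and off-diagonal
entries in `{-1, 0, 1}`, where `|x| = x²`; hence
`∑ f, |M e f| = 2 + (∑ f, M e f ^ 2) - 4 = 2 + 2n - 4`.
-/

/-- The edges of the complete graph on `Fin n`: ordered pairs `(i,j)` with `i < j`. -/
abbrev CompleteEdge (n : ℕ) := {p : Fin n × Fin n // p.1 < p.2}

/-- Oriented incidence matrix of the unweighted complete graph on `n` nodes. -/
def completeIncidence (n : ℕ) : Matrix (Fin n) (CompleteEdge n) ℝ :=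
  fun i e => if i = e.1.1 then 1 else if i = e.1.2 then -1 else 0

theorem Matrix.mul_mul_eq_inv_smul_mul_of_mul_eq_smul {l m n K : Type*} [Field K]
    [Fintype m] [Fintype n] [DecidableEq m] {L X : Matrix m m K} {A : Matrix l m K}
    {B : Matrix m n K} {c : K} (hLXL : L * X * L = L) (hAL : A * L = c • A)
    (hLB : L * B = c • B) (hc : c ≠ 0) :
    A * X * B = c⁻¹ • (A * B) := by
  have key : (c * c) • (A * X * B) = c • (A * B) :=
    calc (c * c) • (A * X * B) = (A * L) * X * (L * B) := by
          rw [hAL, hLB, Matrix.smul_mul, Matrix.smul_mul, Matrix.mul_smul, smul_smul]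
      _ = A * (L * X * L) * B := by simp only [Matrix.mul_assoc]
      _ = c • (A * B) := by rw [hLXL, Matrix.mul_assoc, hLB, Matrix.mul_smul]
  apply smul_right_injective _ (mul_ne_zero hc hc)
  dsimp only
  rw [key, smul_smul, mul_assoc, mul_inv_cancel₀ hc, mul_one]

theorem Matrix.sum_abs_apply_of_mul_self_eq_smul {ι : Type*} [Fintype ι] [DecidableEq ι]
    {M : Matrix ι ι ℝ} (hM : M.IsSymm) {c : ℝ} (hMM : M * M = c • M) (e : ι)
    (hoff : ∀ f ≠ e, |M e f| = M e f ^ 2) :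
    ∑ f, |M e f| = |M e e| + (c - M e e) * M e e := by
  have hsq : ∑ f, M e f ^ 2 = c * M e e := by
    have := congrFun (congrFun hMM e) e
    rw [mul_apply, smul_apply, smul_eq_mul] at this
    rw [← this]
    exact Finset.sum_congr rfl fun f _ => by rw [sq, hM.apply]
  rw [← Finset.add_sum_erase _ _ (Finset.mem_univ e),
    Finset.sum_congr rfl fun f hf => hoff f (Finset.ne_of_mem_erase hf),
    Finset.sum_erase_eq_sub (Finset.mem_univ e), hsq]
  ring

theorem CompleteEdge.two_nsmul_sum {n : ℕ} {M : Type*} [AddCommGroup M]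
    (g : Fin n → Fin n → M) (hg : ∀ i j, g i j = g j i) (hdiag : ∀ i, g i i = 0) :
    2 • ∑ e : CompleteEdge n, g e.1.1 e.1.2 = ∑ i, ∑ j, g i j := by
  have hsplit : ∀ i j, g i j = (if i < j then g i j else 0) + (if j < i then g j i else 0) := by
    intro i j
    rcases lt_trichotomy i j with h | rfl | h
    · simp [h, lt_asymm h]
    · simp [hdiag]
    · simp [h, lt_asymm h, hg i j]
  have hedges :
      ∑ e : CompleteEdge n, g e.1.1 e.1.2 = ∑ i, ∑ j, if i < j then g i j else 0 := by
    rw [← Finset.sum_subtype (Finset.univ.filter fun p : Fin n × Fin n => p.1 < p.2) (by simp)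
      (fun p => g p.1 p.2), Finset.sum_filter, Fintype.sum_prod_type]
  rw [Finset.sum_congr rfl fun i _ => Finset.sum_congr rfl fun j _ => hsplit i j]
  simp only [Finset.sum_add_distrib]
  rw [Finset.sum_comm (f := fun i j => if j < i then g j i else 0), hedges, two_nsmul]

namespace completeIncidence

variable {n : ℕ}

theorem apply_eq (i : Fin n) (e : CompleteEdge n) :
    completeIncidence n i e = (if i = e.1.1 then 1 else 0) - (if i = e.1.2 then 1 else 0) := by
  have hne : e.1.1 ≠ e.1.2 := e.2.ne
  unfold completeIncidence
  split_ifs <;> simp_all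

theorem sum_apply (e : CompleteEdge n) : ∑ i, completeIncidence n i e = 0 := by
  simp [apply_eq]

theorem mul_transpose :
    completeIncidence n * (completeIncidence n)ᵀ = (n : ℝ) • 1 - of fun _ _ => 1 := by
  ext i j
  let g : Fin n → Fin n → ℝ := fun p q =>
    ((if i = p then 1 else 0) - (if i = q then 1 else 0)) *
      ((if j = p then 1 else 0) - (if j = q then 1 else 0))
  have hsum := CompleteEdge.two_nsmul_sum g (fun p q => by ring) (fun p => by simp [g])
  have hall : ∑ p, ∑ q, g p q = 2 * ((n : ℝ) * (if i = j then 1 else 0) - 1) := by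
    simp [g, mul_sub, Finset.sum_sub_distrib, mul_ite, Finset.sum_ite_eq]
    split_ifs <;> ring
  rw [hall, two_nsmul] at hsum
  simp only [mul_apply, transpose_apply, apply_eq, Matrix.sub_apply, Matrix.smul_apply, one_apply,
    of_apply, smul_eq_mul]
  linarith

theorem mul_transpose_mul :
    completeIncidence n * (completeIncidence n)ᵀ * completeIncidence n
      = (n : ℝ) • completeIncidence n := by
  have hJ : (of fun _ _ => (1 : ℝ) : Matrix (Fin n) (Fin n) ℝ) * completeIncidence n = 0 := by
    ext k e
    simpa [mul_apply] using sum_apply e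
  rw [mul_transpose, Matrix.sub_mul, hJ, sub_zero, Matrix.smul_mul, Matrix.one_mul]

theorem transpose_mul_apply (e f : CompleteEdge n) :
    ((completeIncidence n)ᵀ * completeIncidence n) e f
      = (if e.1.1 = f.1.1 then 1 else 0) - (if e.1.1 = f.1.2 then 1 else 0)
        - (if e.1.2 = f.1.1 then 1 else 0) + (if e.1.2 = f.1.2 then 1 else 0) := by
  simp [mul_apply, apply_eq, mul_sub, Finset.sum_sub_distrib, eq_comm]
  ring

theorem transpose_mul_apply_self (e : CompleteEdge n) :
    ((completeIncidence n)ᵀ * completeIncidence n) e e = 2 := by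
  simp [transpose_mul_apply, e.2.ne, e.2.ne']
  norm_num

theorem abs_transpose_mul_apply_of_ne {e f : CompleteEdge n} (hef : f ≠ e) :
    |((completeIncidence n)ᵀ * completeIncidence n) e f|
      = ((completeIncidence n)ᵀ * completeIncidence n) e f ^ 2 := by
  obtain ⟨⟨a, b⟩, hab⟩ := e
  obtain ⟨⟨c, d⟩, hcd⟩ := f
  simp only [ne_eq, Subtype.mk.injEq, Prod.mk.injEq] at hef
  simp only [Fin.lt_def] at hab hcd
  rw [transpose_mul_apply]
  simp only [Fin.ext_iff] at hef ⊢
  split_ifs <;> norm_num <;> omega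

theorem sum_abs_transpose_mul_apply (e : CompleteEdge n) :
    ∑ f, |((completeIncidence n)ᵀ * completeIncidence n) e f| = 2 * (n - 1) := by
  have hsymm : ((completeIncidence n)ᵀ * completeIncidence n).IsSymm := by
    rw [IsSymm, transpose_mul, transpose_transpose]
  have hsq : (completeIncidence n)ᵀ * completeIncidence n *
      ((completeIncidence n)ᵀ * completeIncidence n)
        = (n : ℝ) • ((completeIncidence n)ᵀ * completeIncidence n) := by
    rw [Matrix.mul_assoc, ← Matrix.mul_assoc (completeIncidence n), mul_transpose_mul,
      Matrix.mul_smul]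
  rw [sum_abs_apply_of_mul_self_eq_smul hsymm hsq e fun f hf => abs_transpose_mul_apply_of_ne hf,
    transpose_mul_apply_self, abs_two]
  ring

end completeIncidence

theorem cutset_projection_complete_graph_general
    (n : ℕ) (hn : 2 ≤ n)
    (B : Matrix (Fin n) (CompleteEdge n) ℝ) (hB : B = completeIncidence n)
    (L Ldag : Matrix (Fin n) (Fin n) ℝ)
    (hL : L = B * Bᵀ)
    (hmp1 : L * Ldag * L = L)
    (P : Matrix (CompleteEdge n) (CompleteEdge n) ℝ)
    (hP : P = Bᵀ * Ldag * B) :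
    P = (n : ℝ)⁻¹ • (Bᵀ * B) ∧
    (∀ e : CompleteEdge n, ∑ f : CompleteEdge n, |P e f| ≤ 2 * (n - 1) / n) ∧
    (∃ e : CompleteEdge n, ∑ f : CompleteEdge n, |P e f| = 2 * (n - 1) / n) := by
  subst hB hL hP
  have hn0 : (n : ℝ) ≠ 0 := Nat.cast_ne_zero.mpr (by omega)
  have hLB := completeIncidence.mul_transpose_mul (n := n)
  have hBL : (completeIncidence n)ᵀ * (completeIncidence n * (completeIncidence n)ᵀ)
      = (n : ℝ) • (completeIncidence n)ᵀ := by
    simpa [transpose_mul, Matrix.mul_assoc] using congrArg transpose hLB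
  have hP := mul_mul_eq_inv_smul_mul_of_mul_eq_smul hmp1 hBL hLB hn0
  have hrow (e : CompleteEdge n) :
      ∑ f, |((completeIncidence n)ᵀ * Ldag * completeIncidence n) e f| = 2 * (n - 1) / n := by
    simp_rw [hP, Matrix.smul_apply, smul_eq_mul, abs_mul, ← Finset.mul_sum,
      completeIncidence.sum_abs_transpose_mul_apply, abs_inv, Nat.abs_cast]
    field_simp
  let e₀ : CompleteEdge n :=
    ⟨(⟨0, by omega⟩, ⟨1, by omega⟩), Fin.mk_lt_mk.mpr one_pos⟩
  exact ⟨hP, fun e => (hrow e).le, e₀, hrow e₀⟩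

/-- For the unweighted complete graph on `n ≥ 2` nodes with incidence
matrix `B`, Laplacian `L = BBᵀ` and Moore–Penrose pseudoinverse `L†`, the cutset projection
`𝒫 = Bᵀ L† B` equals `(1/n) Bᵀ B`, and its induced ∞-norm (the maximum absolute row sum)
equals `2(n−1)/n`. -/
theorem cutset_projection_complete_graph
    (n : ℕ) (hn : 2 ≤ n)
    (B : Matrix (Fin n) (CompleteEdge n) ℝ) (hB : B = completeIncidence n)
    (L Ldag : Matrix (Fin n) (Fin n) ℝ)
    (hL : L = B * Bᵀ)
    (hmp1 : L * Ldag * L = L) (hmp2 : Ldag * L * Ldag = Ldag)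
    (hmp3 : (L * Ldag)ᵀ = L * Ldag) (hmp4 : (Ldag * L)ᵀ = Ldag * L)
    (P : Matrix (CompleteEdge n) (CompleteEdge n) ℝ)
    (hP : P = Bᵀ * Ldag * B) :
    P = (n : ℝ)⁻¹ • (Bᵀ * B) ∧
    (∀ e : CompleteEdge n, ∑ f : CompleteEdge n, |P e f| ≤ 2 * (n - 1) / n) ∧
    (∃ e : CompleteEdge n, ∑ f : CompleteEdge n, |P e f| = 2 * (n - 1) / n) :=
  cutset_projection_complete_graph_general n hn B hB L Ldag hL hmp1 P hP
end

section
/- Let 𝒫 be the cutset projection of a connected weighted graph G. If R_eff ∈ ℝ^{n×n} denotes the matrix of effective resistances of G, i.e., (R_eff)_{ij} = (eᵢ−eⱼ)ᵀ L† (eᵢ−eⱼ), then 𝒫 = −(1/2) Bᵀ R_eff B 𝒜. -/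
open Matrix

/-! Writing `X = L†` (symmetric, as the Moore–Penrose inverse of the symmetric Laplacian), the
resistance matrix is `R = d 𝟙ᵀ + 𝟙 dᵀ - 2 X` with `d` the diagonal of `X`. The rank-one terms are
killed by `Bᵀ` on the left and by `B` on the right because `Bᵀ 𝟙 = 0` (connectivity), so that
`Bᵀ R B = -2 Bᵀ X B`. -/

namespace Matrix

variable {m n R : Type*} [CommSemiring R]

theorem IsSymm.mul_mul_transpose [Fintype m] {D : Matrix m m R} (hD : D.IsSymm)
    (B : Matrix n m R) : (B * D * Bᵀ).IsSymm := by
  rw [IsSymm, transpose_mul, transpose_mul, transpose_transpose, hD.eq, Matrix.mul_assoc]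

variable [Fintype m] [Fintype n]

structure IsMoorePenroseInverse (A : Matrix m n R) (X : Matrix n m R) : Prop where
  mul_mul_self : A * X * A = A
  self_mul_mul : X * A * X = X
  transpose_mul_right : (A * X)ᵀ = A * X
  transpose_mul_left : (X * A)ᵀ = X * A

namespace IsMoorePenroseInverse

variable {A : Matrix m n R} {X Y : Matrix n m R}

theorem mul_right_eq (hX : IsMoorePenroseInverse A X) (hY : IsMoorePenroseInverse A Y) :
    A * Y = A * X :=
  calc A * Y = (A * X) * (A * Y) := by rw [← Matrix.mul_assoc, hX.mul_mul_self]
    _ = (A * X)ᵀ * (A * Y)ᵀ := by rw [hX.transpose_mul_right, hY.transpose_mul_right]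
    _ = (A * Y * A * X)ᵀ := by simp only [transpose_mul, Matrix.mul_assoc]
    _ = A * X := by rw [hY.mul_mul_self, hX.transpose_mul_right]

theorem mul_left_eq (hX : IsMoorePenroseInverse A X) (hY : IsMoorePenroseInverse A Y) :
    Y * A = X * A :=
  calc Y * A = (Y * A) * (X * A) := by
        rw [Matrix.mul_assoc, ← Matrix.mul_assoc A, hX.mul_mul_self]
    _ = (Y * A)ᵀ * (X * A)ᵀ := by rw [hX.transpose_mul_left, hY.transpose_mul_left]
    _ = (X * (A * Y * A))ᵀ := by simp only [transpose_mul, Matrix.mul_assoc]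
    _ = X * A := by rw [hY.mul_mul_self, hX.transpose_mul_left]

theorem unique (hX : IsMoorePenroseInverse A X) (hY : IsMoorePenroseInverse A Y) : X = Y :=
  calc X = X * A * X := hX.self_mul_mul.symm
    _ = Y * A * Y := by rw [← hX.mul_left_eq hY, Matrix.mul_assoc, Matrix.mul_assoc,
          hX.mul_right_eq hY]
    _ = Y := hY.self_mul_mul

theorem transpose (hX : IsMoorePenroseInverse A X) : IsMoorePenroseInverse Aᵀ Xᵀ where
  mul_mul_self := by rw [← transpose_mul, ← transpose_mul, ← Matrix.mul_assoc, hX.mul_mul_self]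
  self_mul_mul := by rw [← transpose_mul, ← transpose_mul, ← Matrix.mul_assoc, hX.self_mul_mul]
  transpose_mul_right := by rw [← transpose_mul, transpose_transpose, hX.transpose_mul_left]
  transpose_mul_left := by rw [← transpose_mul, transpose_transpose, hX.transpose_mul_right]

theorem isSymm {A X : Matrix n n R} (hA : A.IsSymm)
    (hX : IsMoorePenroseInverse A X) : X.IsSymm := by
  have hXt := hX.transpose
  rw [hA.eq] at hXt
  exact hXt.unique hX

end IsMoorePenroseInverse

end Matrix

section Resistance

variable {ι κ R : Type*} [Fintype ι] [CommRing R]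

theorem transpose_mul_vecMulVec_mul_eq_zero {B : Matrix ι κ R}
    (hB : Bᵀ *ᵥ (1 : ι → R) = 0) (u : ι → R) :
    Bᵀ * vecMulVec u (1 : ι → R) * B = 0 ∧ Bᵀ * vecMulVec (1 : ι → R) u * B = 0 := by
  have hB' : (1 : ι → R) ᵥ* B = 0 := by rw [← mulVec_transpose, hB]
  exact ⟨by rw [mul_vecMulVec, vecMulVec_mul, hB', vecMulVec_zero],
    by rw [mul_vecMulVec, vecMulVec_mul, hB, zero_vecMulVec]⟩

variable [DecidableEq ι]

theorem single_sub_single_dotProduct_mulVec (X : Matrix ι ι R) (i j : ι) :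
    (Pi.single i 1 - Pi.single j 1) ⬝ᵥ X *ᵥ (Pi.single i 1 - Pi.single j 1) =
      X i i + X j j - X i j - X j i := by
  simp only [sub_dotProduct, mulVec_sub, dotProduct_sub, single_one_dotProduct,
    mulVec_single_one, col_apply]
  ring

theorem resistance_eq_vecMulVec_sub {X Reff : Matrix ι ι R}
    (hReff : ∀ i j, Reff i j =
      (Pi.single i 1 - Pi.single j 1) ⬝ᵥ X *ᵥ (Pi.single i 1 - Pi.single j 1)) :
    Reff = vecMulVec X.diag 1 + vecMulVec 1 X.diag - X - Xᵀ := by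
  ext i j
  rw [hReff, single_sub_single_dotProduct_mulVec]
  simp

theorem transpose_mul_resistance_mul [Fintype κ] {X Reff : Matrix ι ι R} {B : Matrix ι κ R}
    (hB : Bᵀ *ᵥ (1 : ι → R) = 0) (hX : X.IsSymm)
    (hReff : ∀ i j, Reff i j =
      (Pi.single i 1 - Pi.single j 1) ⬝ᵥ X *ᵥ (Pi.single i 1 - Pi.single j 1)) :
    Bᵀ * Reff * B = -(2 : R) • (Bᵀ * X * B) := by
  obtain ⟨hd₁, hd₂⟩ := transpose_mul_vecMulVec_mul_eq_zero hB X.diag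
  rw [resistance_eq_vecMulVec_sub hReff, hX.eq]
  simp only [Matrix.mul_sub, Matrix.mul_add, Matrix.sub_mul, Matrix.add_mul, hd₁, hd₂]
  module

end Resistance

theorem cutset_projection_effective_resistance_general
    (n m : ℕ) (B : Matrix (Fin n) (Fin m) ℝ) (a : Fin m → ℝ)
    (hconn : ∀ x : Fin n → ℝ, Bᵀ.mulVec x = 0 ↔ ∃ c : ℝ, x = fun _ => c)
    (L Ldag : Matrix (Fin n) (Fin n) ℝ)
    (hL : L = B * Matrix.diagonal a * Bᵀ)
    (hmp1 : L * Ldag * L = L) (hmp2 : Ldag * L * Ldag = Ldag)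
    (hmp3 : (L * Ldag)ᵀ = L * Ldag) (hmp4 : (Ldag * L)ᵀ = Ldag * L)
    (Reff : Matrix (Fin n) (Fin n) ℝ)
    (hReff : ∀ i j, Reff i j =
      dotProduct (Pi.single i 1 - Pi.single j 1)
        (Ldag.mulVec (Pi.single i 1 - Pi.single j 1))) :
    Bᵀ * Ldag * B * Matrix.diagonal a =
      (-(1 / 2 : ℝ)) • (Bᵀ * Reff * B * Matrix.diagonal a) := by
  have hLsym : L.IsSymm := hL ▸ (isSymm_diagonal a).mul_mul_transpose B
  have hLdag : Ldag.IsSymm :=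
    IsMoorePenroseInverse.isSymm hLsym ⟨hmp1, hmp2, hmp3, hmp4⟩
  have hB : Bᵀ *ᵥ 1 = 0 := (hconn 1).2 ⟨1, rfl⟩
  rw [transpose_mul_resistance_mul hB hLdag hReff, Matrix.smul_mul, smul_smul]
  norm_num

/-- Let `𝒫 = Bᵀ L† B𝒜` be the cutset projection of a connected weighted
graph, and let `R_eff` be the matrix of effective resistances,
`(R_eff)_{ij} = (eᵢ−eⱼ)ᵀ L† (eᵢ−eⱼ)`. Then `𝒫 = −(1/2) Bᵀ R_eff B 𝒜`. -/
theorem cutset_projection_effective_resistance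
    (n m : ℕ) (B : Matrix (Fin n) (Fin m) ℝ) (a : Fin m → ℝ)
    (ha : ∀ e, 0 < a e)
    (hconn : ∀ x : Fin n → ℝ, Bᵀ.mulVec x = 0 ↔ ∃ c : ℝ, x = fun _ => c)
    (L Ldag : Matrix (Fin n) (Fin n) ℝ)
    (hL : L = B * Matrix.diagonal a * Bᵀ)
    (hmp1 : L * Ldag * L = L) (hmp2 : Ldag * L * Ldag = Ldag)
    (hmp3 : (L * Ldag)ᵀ = L * Ldag) (hmp4 : (Ldag * L)ᵀ = Ldag * L)
    (Reff : Matrix (Fin n) (Fin n) ℝ)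
    (hReff : ∀ i j, Reff i j =
      dotProduct (Pi.single i 1 - Pi.single j 1)
        (Ldag.mulVec (Pi.single i 1 - Pi.single j 1))) :
    Bᵀ * Ldag * B * Matrix.diagonal a =
      (-(1 / 2 : ℝ)) • (Bᵀ * Reff * B * Matrix.diagonal a) :=
  cutset_projection_effective_resistance_general n m B a hconn L Ldag hL hmp1 hmp2 hmp3 hmp4 Reff
    hReff
end

section
/- Let G be a connected weighted graph with incidence matrix B, weight matrix 𝒜, Laplacian L = B𝒜Bᵀ, and cutset projection 𝒫 = Bᵀ L† B𝒜. For any γ ∈ [0, π/2), any p ∈ [1,∞], any y ∈ ℝ^m with ‖y‖_p ≤ γ, and any z ∈ Im(Bᵀ), if 𝒫 diag(sinc(y)) z = 0 then z = 0. In particular the minimum amplification factor α_p(γ) = min over such y and unit z of ‖𝒫 diag(sinc(y)) z‖_p is strictly positive. -/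
/-!
Let `L† = Ldag`. Because `L L†` is the orthogonal projection onto `Im L` and
`Im L = Im B` (as `𝒜` is positive definite), `L L† B = B`; hence `B𝒜𝒫 = B𝒜`, i.e.
`zᵀ𝒜𝒫 = zᵀ𝒜` for `z ∈ Im Bᵀ`. If `𝒫 diag(sinc y) z = 0`, pairing with `zᵀ𝒜` gives
`∑ₑ aₑ sinc(yₑ) zₑ² = 0`, and `sinc(yₑ) > 0` because `|yₑ| ≤ ‖y‖_p < π`, so `z = 0`.
The amplification bound is the minimum of the continuous map `(y, z) ↦ ‖𝒫 diag(sinc y) z‖_p`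
over the compact set of admissible pairs, which is positive by injectivity.
-/

open Matrix

/-- The unnormalized sinc function, `sinc t = sin t / t` with `sinc 0 = 1`. -/
noncomputable def sinc (t : ℝ) : ℝ := if t = 0 then 1 else Real.sin t / t

/-- The `p`-norm of a real vector, for `p ∈ [1,∞]`. -/
noncomputable def pnorm {k : ℕ} (p : ENNReal) [Fact (1 ≤ p)] (v : Fin k → ℝ) : ℝ :=
  ‖(WithLp.equiv p (Fin k → ℝ)).symm v‖

lemma Real.sinc_pos_of_abs_lt_pi {t : ℝ} (ht : |t| < Real.pi) : 0 < Real.sinc t := by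
  rcases eq_or_ne t 0 with rfl | ht0
  · simp
  have hsinc_abs : Real.sinc t = Real.sinc |t| := by
    rcases abs_choice t with h | h <;> simp [h]
  have hpos : 0 < |t| := abs_pos.mpr ht0
  rw [hsinc_abs, Real.sinc_of_ne_zero hpos.ne']
  exact div_pos (Real.sin_pos_of_pos_of_lt_pi hpos ht) hpos

section PNorm

variable {k : ℕ} (p : ENNReal) [Fact (1 ≤ p)]

lemma abs_le_pnorm (v : Fin k → ℝ) (i : Fin k) : |v i| ≤ pnorm p v :=
  PiLp.norm_apply_le (WithLp.toLp p v) i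

lemma pnorm_eq_zero_iff {v : Fin k → ℝ} : pnorm p v = 0 ↔ v = 0 := by
  rw [pnorm, norm_eq_zero]
  exact WithLp.toLp_eq_zero p

lemma continuous_pnorm : Continuous (pnorm p : (Fin k → ℝ) → ℝ) :=
  continuous_norm.comp (PiLp.continuous_toLp p _)

lemma isCompact_pnorm_le (r : ℝ) : IsCompact {v : Fin k → ℝ | pnorm p v ≤ r} := by
  have h := (PiLp.homeomorph p fun _ : Fin k => ℝ).symm.isCompact_preimage.mpr
    (isCompact_closedBall (0 : PiLp p fun _ : Fin k => ℝ) r)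
  convert h using 1
  ext v
  simp [pnorm, PiLp.homeomorph]

lemma isCompact_setOf_mem_range_pnorm_eq {n : ℕ} (M : Matrix (Fin k) (Fin n) ℝ) (r : ℝ) :
    IsCompact {z : Fin k → ℝ | (∃ ξ, z = M *ᵥ ξ) ∧ pnorm p z = r} := by
  have hrange : IsClosed {z : Fin k → ℝ | ∃ ξ, z = M *ᵥ ξ} := by
    have h := (LinearMap.range M.mulVecLin).closed_of_finiteDimensional
    simp only [LinearMap.coe_range, Matrix.coe_mulVecLin] at h
    simpa [Set.range, eq_comm] using h
  exact (isCompact_pnorm_le p r).of_isClosed_subset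
    (hrange.inter (isClosed_eq (continuous_pnorm p) continuous_const)) fun z hz => hz.2.le

end PNorm

section CutsetProjection

variable {n m : ℕ} {a : Fin m → ℝ}

lemma eq_zero_of_sum_mul_sq_eq_zero (ha : ∀ e, 0 < a e) {v : Fin m → ℝ}
    (h : ∑ e, a e * v e ^ 2 = 0) : v = 0 := by
  funext e
  have hterm := (Finset.sum_eq_zero_iff_of_nonneg fun e _ =>
    mul_nonneg (ha e).le (sq_nonneg (v e))).mp h e (Finset.mem_univ e)
  simpa [(ha e).ne'] using hterm

lemma eq_zero_of_mul_diagonal_mul_transpose_eq_zero (ha : ∀ e, 0 < a e)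
    {M : Matrix (Fin n) (Fin m) ℝ} (h : M * diagonal a * Mᵀ = 0) : M = 0 := by
  refine funext fun i => eq_zero_of_sum_mul_sq_eq_zero ha ?_
  have hii := congrFun (congrFun h i) i
  simp only [mul_apply, diagonal_apply, transpose_apply, Matrix.zero_apply] at hii
  simpa [sq, mul_comm, mul_left_comm] using hii

variable {B : Matrix (Fin n) (Fin m) ℝ} {L Ldag : Matrix (Fin n) (Fin n) ℝ}

lemma laplacian_mul_pinv_mul_incidence (ha : ∀ e, 0 < a e) (hL : L = B * diagonal a * Bᵀ)
    (hmp1 : L * Ldag * L = L) (hmp3 : (L * Ldag)ᵀ = L * Ldag) : L * Ldag * B = B := by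
  set Q := 1 - L * Ldag
  have hQL : Q * L = 0 := by rw [Matrix.sub_mul, Matrix.one_mul, hmp1, sub_self]
  have hQsymm : Qᵀ = Q := by rw [transpose_sub, transpose_one, hmp3]
  have hQB : Q * B = 0 := by
    refine eq_zero_of_mul_diagonal_mul_transpose_eq_zero ha ?_
    calc Q * B * diagonal a * (Q * B)ᵀ = Q * L * Q := by
          rw [transpose_mul, hQsymm, hL]; simp only [Matrix.mul_assoc]
      _ = 0 := by rw [hQL, Matrix.zero_mul]
  rw [Matrix.sub_mul, Matrix.one_mul, sub_eq_zero] at hQB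
  exact hQB.symm

lemma incidence_mul_diagonal_mul_cutsetProjection (ha : ∀ e, 0 < a e)
    (hL : L = B * diagonal a * Bᵀ) (hmp1 : L * Ldag * L = L) (hmp3 : (L * Ldag)ᵀ = L * Ldag) :
    B * diagonal a * (Bᵀ * Ldag * B * diagonal a) = B * diagonal a :=
  calc B * diagonal a * (Bᵀ * Ldag * B * diagonal a)
        = B * diagonal a * Bᵀ * Ldag * B * diagonal a := by simp only [Matrix.mul_assoc]
    _ = B * diagonal a := by rw [← hL, laplacian_mul_pinv_mul_incidence ha hL hmp1 hmp3]

lemma vecMul_diagonal_vecMul_eq_of_mul_diagonal_mul_eq {P : Matrix (Fin m) (Fin m) ℝ}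
    (hBAP : B * diagonal a * P = B * diagonal a) (ξ : Fin n → ℝ) :
    (Bᵀ *ᵥ ξ) ᵥ* diagonal a ᵥ* P = (Bᵀ *ᵥ ξ) ᵥ* diagonal a := by
  simp only [mulVec_transpose, vecMul_vecMul, hBAP]

lemma mulVec_transpose_eq_zero_of_mulVec_mul_eq_zero {P : Matrix (Fin m) (Fin m) ℝ}
    (ha : ∀ e, 0 < a e) (hBAP : B * diagonal a * P = B * diagonal a) {d : Fin m → ℝ}
    (hd : ∀ e, 0 < d e) {ξ : Fin n → ℝ} (h : P *ᵥ (fun e => d e * (Bᵀ *ᵥ ξ) e) = 0) :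
    Bᵀ *ᵥ ξ = 0 := by
  set z := Bᵀ *ᵥ ξ
  refine eq_zero_of_sum_mul_sq_eq_zero (fun e => mul_pos (ha e) (hd e)) ?_
  calc ∑ e, a e * d e * z e ^ 2 = (z ᵥ* diagonal a) ⬝ᵥ (fun e => d e * z e) := by
        simp only [dotProduct, vecMul_diagonal]
        exact Finset.sum_congr rfl fun e _ => by ring
    _ = (z ᵥ* diagonal a ᵥ* P) ⬝ᵥ (fun e => d e * z e) := by
        rw [vecMul_diagonal_vecMul_eq_of_mul_diagonal_mul_eq hBAP]
    _ = 0 := by rw [← dotProduct_mulVec, h, dotProduct_zero]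

end CutsetProjection

theorem scaled_projection_injective_and_min_amplification_pos_general
    (n m : ℕ) (B : Matrix (Fin n) (Fin m) ℝ) (a : Fin m → ℝ)
    (ha : ∀ e, 0 < a e)
    (L Ldag : Matrix (Fin n) (Fin n) ℝ)
    (hL : L = B * Matrix.diagonal a * Bᵀ)
    (hmp1 : L * Ldag * L = L)
    (hmp3 : (L * Ldag)ᵀ = L * Ldag)
    (P : Matrix (Fin m) (Fin m) ℝ)
    (hP : P = Bᵀ * Ldag * B * Matrix.diagonal a)
    (γ : ℝ) (hγ : 0 ≤ γ ∧ γ < Real.pi / 2)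
    (p : ENNReal) [Fact (1 ≤ p)] :
    (∀ y z : Fin m → ℝ, pnorm p y ≤ γ → (∃ ξ : Fin n → ℝ, z = Bᵀ.mulVec ξ) →
      P.mulVec (fun e => sinc (y e) * z e) = 0 → z = 0) ∧
    (∃ α : ℝ, 0 < α ∧ ∀ y z : Fin m → ℝ, pnorm p y ≤ γ →
      (∃ ξ : Fin n → ℝ, z = Bᵀ.mulVec ξ) → pnorm p z = 1 →
      α ≤ pnorm p (P.mulVec (fun e => sinc (y e) * z e))) := by
  have hBAP : B * diagonal a * P = B * diagonal a :=
    hP ▸ incidence_mul_diagonal_mul_cutsetProjection ha hL hmp1 hmp3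
  have hsinc : ∀ y : Fin m → ℝ, pnorm p y ≤ γ → ∀ e, 0 < sinc (y e) := by
    intro y hy e
    have hye := abs_le_pnorm p y e
    exact Real.sinc_pos_of_abs_lt_pi (by linarith [Real.pi_pos])
  have hinj : ∀ y z : Fin m → ℝ, pnorm p y ≤ γ → (∃ ξ : Fin n → ℝ, z = Bᵀ.mulVec ξ) →
      P.mulVec (fun e => sinc (y e) * z e) = 0 → z = 0 := by
    rintro y z hy ⟨ξ, rfl⟩ h
    exact mulVec_transpose_eq_zero_of_mulVec_mul_eq_zero ha hBAP (hsinc y hy) h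
  have hcont : Continuous fun q : (Fin m → ℝ) × (Fin m → ℝ) =>
      pnorm p (P *ᵥ fun e => sinc (q.1 e) * q.2 e) := by
    have : Continuous sinc := Real.continuous_sinc
    have := continuous_pnorm p (k := m)
    fun_prop
  obtain ⟨α, hα, hαle⟩ := ((isCompact_pnorm_le p γ).prod
    (isCompact_setOf_mem_range_pnorm_eq p Bᵀ 1)).exists_forall_le' hcont.continuousOn
    (a := 0) fun q ⟨hy, hz, hz1⟩ => by
      refine (norm_nonneg _).lt_of_ne' fun h0 => ?_
      have hz0 := hinj q.1 q.2 hy hz ((pnorm_eq_zero_iff p).mp h0)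
      rw [hz0, (pnorm_eq_zero_iff p).mpr rfl] at hz1
      exact zero_ne_one hz1
  exact ⟨hinj, α, hα, fun y z hy hz hz1 => hαle (y, z) ⟨hy, hz, hz1⟩⟩

/-- Let `𝒫 = Bᵀ L† B𝒜` be the cutset projection of a connected weighted
graph. For any `γ ∈ [0, π/2)`, `p ∈ [1,∞]`, any `y` with `‖y‖_p ≤ γ`, and any
`z ∈ Im(Bᵀ)`, `𝒫 diag(sinc y) z = 0` implies `z = 0`. In particular the minimum
amplification factor `α_p(γ)` is strictly positive: there is `α > 0` bounding
`‖𝒫 diag(sinc y) z‖_p` from below over all such `y` and all unit `z ∈ Im(Bᵀ)`. -/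
theorem scaled_projection_injective_and_min_amplification_pos
    (n m : ℕ) (B : Matrix (Fin n) (Fin m) ℝ) (a : Fin m → ℝ)
    (ha : ∀ e, 0 < a e)
    (hconn : ∀ x : Fin n → ℝ, Bᵀ.mulVec x = 0 ↔ ∃ c : ℝ, x = fun _ => c)
    (L Ldag : Matrix (Fin n) (Fin n) ℝ)
    (hL : L = B * Matrix.diagonal a * Bᵀ)
    (hmp1 : L * Ldag * L = L) (hmp2 : Ldag * L * Ldag = Ldag)
    (hmp3 : (L * Ldag)ᵀ = L * Ldag) (hmp4 : (Ldag * L)ᵀ = Ldag * L)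
    (P : Matrix (Fin m) (Fin m) ℝ)
    (hP : P = Bᵀ * Ldag * B * Matrix.diagonal a)
    (γ : ℝ) (hγ : 0 ≤ γ ∧ γ < Real.pi / 2)
    (p : ENNReal) [Fact (1 ≤ p)] :
    (∀ y z : Fin m → ℝ, pnorm p y ≤ γ → (∃ ξ : Fin n → ℝ, z = Bᵀ.mulVec ξ) →
      P.mulVec (fun e => sinc (y e) * z e) = 0 → z = 0) ∧
    (∃ α : ℝ, 0 < α ∧ ∀ y z : Fin m → ℝ, pnorm p y ≤ γ →
      (∃ ξ : Fin n → ℝ, z = Bᵀ.mulVec ξ) → pnorm p z = 1 →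
      α ≤ pnorm p (P.mulVec (fun e => sinc (y e) * z e))) :=
  scaled_projection_injective_and_min_amplification_pos_general n m B a ha L Ldag hL hmp1 hmp3 P hP
    γ hγ p
end

section
/- Let G be a connected weighted graph with incidence matrix B, weight matrix 𝒜, and Laplacian L = B𝒜Bᵀ. For a vector v ∈ ℝ^m with strictly positive entries, define L_v = B𝒜 diag(v) Bᵀ. Then for every z ∈ Im(Bᵀ), the map Q(v) : Im(Bᵀ) → Im(Bᵀ) defined by Q(v)z = Bᵀ L† B𝒜 diag(v) z is invertible with inverse (Q(v))⁻¹ z = Bᵀ (L_v)† B𝒜 z. -/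
open Matrix

lemma quad_zero (n m : ℕ) (B : Matrix (Fin n) (Fin m) ℝ) (w : Fin m → ℝ)
    (hw : ∀ e, 0 < w e) (u : Fin n → ℝ)
    (h : u ⬝ᵥ (B * Matrix.diagonal w * Bᵀ).mulVec u = 0) :
    Bᵀ.mulVec u = 0 := by
  set s := Bᵀ.mulVec u with hs
  have h1 : (B * Matrix.diagonal w * Bᵀ).mulVec u
      = B.mulVec ((Matrix.diagonal w).mulVec s) := by
    rw [← mulVec_mulVec, ← mulVec_mulVec]
  rw [h1] at h
  have h2 : u ⬝ᵥ B.mulVec ((Matrix.diagonal w).mulVec s)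
      = s ⬝ᵥ (Matrix.diagonal w).mulVec s := by
    rw [dotProduct_mulVec, ← mulVec_transpose]
  rw [h2] at h
  have h3 : s ⬝ᵥ (Matrix.diagonal w).mulVec s = ∑ i, w i * (s i)^2 := by
    simp [dotProduct, mulVec_diagonal]
    congr 1; funext i; ring
  rw [h3] at h
  have h4 : ∀ i ∈ Finset.univ, (0:ℝ) ≤ w i * (s i)^2 := by
    intro i _; exact mul_nonneg (hw i).le (sq_nonneg _)
  have h5 := (Finset.sum_eq_zero_iff_of_nonneg h4).mp h
  funext i
  have h6 := h5 i (Finset.mem_univ i)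
  have hwi := (hw i).ne'
  have h7 : (s i)^2 = 0 := by
    rcases mul_eq_zero.mp h6 with h | h
    · exact absurd h hwi
    · exact h
  simpa using pow_eq_zero_iff (n := 2) (by norm_num) |>.mp h7

lemma dag_cancel (n m : ℕ) (B : Matrix (Fin n) (Fin m) ℝ) (w : Fin m → ℝ)
    (hw : ∀ e, 0 < w e) (M Mdag : Matrix (Fin n) (Fin n) ℝ)
    (hM : M = B * Matrix.diagonal w * Bᵀ)
    (hmp1 : M * Mdag * M = M) (ξ : Fin n → ℝ) :
    Bᵀ.mulVec ((Mdag * M).mulVec ξ) = Bᵀ.mulVec ξ := by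
  set u := (Mdag * M).mulVec ξ - ξ with hu
  have hMu : M.mulVec u = 0 := by
    have h1 : M.mulVec ((Mdag * M).mulVec ξ) = M.mulVec ξ := by
      rw [mulVec_mulVec, ← Matrix.mul_assoc, hmp1]
    simp [hu, Matrix.mulVec_sub, h1]
  have hq : u ⬝ᵥ M.mulVec u = 0 := by rw [hMu]; simp
  have hB := quad_zero n m B w hw u (by rw [← hM]; exact hq)
  have h2 : Bᵀ.mulVec ((Mdag * M).mulVec ξ) - Bᵀ.mulVec ξ = 0 := by
    rw [← Matrix.mulVec_sub]; exact hB
  linear_combination (norm := module) h2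

lemma proj_fixed (n m : ℕ) (B : Matrix (Fin n) (Fin m) ℝ) (w : Fin m → ℝ)
    (hw : ∀ e, 0 < w e)
    (hconn : ∀ x : Fin n → ℝ, Bᵀ.mulVec x = 0 ↔ ∃ c : ℝ, x = fun _ => c)
    (M Mdag : Matrix (Fin n) (Fin n) ℝ)
    (hM : M = B * Matrix.diagonal w * Bᵀ)
    (hmp1 : M * Mdag * M = M) (hmp3 : (M * Mdag)ᵀ = M * Mdag)
    (t : Fin m → ℝ) :
    (M * Mdag).mulVec (B.mulVec t) = B.mulVec t := by
  have hB1 : Bᵀ.mulVec (fun _ => (1:ℝ)) = 0 := (hconn _).mpr ⟨1, rfl⟩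
  have hMsym : Mᵀ = M := by
    rw [hM]; simp [Matrix.transpose_mul, Matrix.mul_assoc, Matrix.diagonal_transpose]
  have h5 : M * (M * Mdag) = M := by
    have h6 : ((M * Mdag) * M)ᵀ = Mᵀ * (M * Mdag)ᵀ := Matrix.transpose_mul _ _
    rw [hmp1, hmp3, hMsym] at h6
    exact h6.symm
  have hM1 : M.vecMul (fun _ => (1:ℝ)) = 0 := by
    have h7 : M.vecMul (fun _ => (1:ℝ)) = Mᵀ.mulVec (fun _ => (1:ℝ)) := by
      rw [← mulVec_transpose]
    rw [h7, hMsym, hM, ← mulVec_mulVec, ← mulVec_mulVec, hB1]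
    simp
  have main : ∀ x : Fin n → ℝ, (fun _ => (1:ℝ)) ⬝ᵥ x = 0 →
      (M * Mdag).mulVec x = x := by
    intro x hx1
    set u := x - (M * Mdag).mulVec x with hu
    have hvm : u ᵥ* M = 0 := by
      have h1 : u ᵥ* M = Mᵀ.mulVec u := (mulVec_transpose M u).symm
      rw [h1, hMsym, hu, Matrix.mulVec_sub, mulVec_mulVec, h5, sub_self]
    have hq : u ⬝ᵥ M.mulVec u = 0 := by
      rw [dotProduct_mulVec, hvm]; simp
    have hB := quad_zero n m B w hw u (by rw [← hM]; exact hq)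
    obtain ⟨c, hc⟩ := (hconn u).mp hB
    have hone : (fun _ => (1:ℝ)) ⬝ᵥ u = 0 := by
      rw [hu, dotProduct_sub]
      have e1 : (fun _ => (1:ℝ)) ⬝ᵥ (M * Mdag).mulVec x = 0 := by
        rw [dotProduct_mulVec, ← Matrix.vecMul_vecMul, hM1, Matrix.zero_vecMul]
        simp
      rw [e1, hx1, sub_zero]
    rw [hc] at hone
    simp [dotProduct] at hone
    have hu0 : u = 0 := by
      rcases hone with h | h
      · funext i; exact absurd i.isLt (by omega)
      · rw [hc, h]; funext i; rfl
    have h8 : x - (M * Mdag).mulVec x = 0 := hu0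
    linear_combination (norm := module) -h8
  refine main _ ?_
  rw [dotProduct_mulVec, ← mulVec_transpose, hB1]
  simp

/-- For a connected weighted graph and a positive vector `v ∈ ℝ^m`, let
`L_v = B𝒜 diag(v) Bᵀ` with Moore–Penrose pseudoinverse `L_v†`. Then the map
`Q(v) : z ↦ Bᵀ L† B𝒜 diag(v) z` on `Im(Bᵀ)` is invertible with inverse
`z ↦ Bᵀ L_v† B𝒜 z`: the two maps compose to the identity on `Im(Bᵀ)` (in both orders),
and `Q(v)` maps `Im(Bᵀ)` into itself. -/
theorem Q_invertible
    (n m : ℕ) (B : Matrix (Fin n) (Fin m) ℝ) (a : Fin m → ℝ)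
    (ha : ∀ e, 0 < a e)
    (hconn : ∀ x : Fin n → ℝ, Bᵀ.mulVec x = 0 ↔ ∃ c : ℝ, x = fun _ => c)
    (L Ldag : Matrix (Fin n) (Fin n) ℝ)
    (hL : L = B * Matrix.diagonal a * Bᵀ)
    (hmp1 : L * Ldag * L = L) (hmp2 : Ldag * L * Ldag = Ldag)
    (hmp3 : (L * Ldag)ᵀ = L * Ldag) (hmp4 : (Ldag * L)ᵀ = Ldag * L)
    (v : Fin m → ℝ) (hv : ∀ e, 0 < v e)
    (Lv Lvdag : Matrix (Fin n) (Fin n) ℝ)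
    (hLv : Lv = B * Matrix.diagonal a * Matrix.diagonal v * Bᵀ)
    (hv1 : Lv * Lvdag * Lv = Lv) (hv2 : Lvdag * Lv * Lvdag = Lvdag)
    (hv3 : (Lv * Lvdag)ᵀ = Lv * Lvdag) (hv4 : (Lvdag * Lv)ᵀ = Lvdag * Lv)
    (Q Qinv : Matrix (Fin m) (Fin m) ℝ)
    (hQ : Q = Bᵀ * Ldag * B * Matrix.diagonal a * Matrix.diagonal v)
    (hQinv : Qinv = Bᵀ * Lvdag * B * Matrix.diagonal a) :
    ∀ z : Fin m → ℝ, (∃ ξ : Fin n → ℝ, z = Bᵀ.mulVec ξ) →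
      (∃ ξ : Fin n → ℝ, Q.mulVec z = Bᵀ.mulVec ξ) ∧
      Q.mulVec (Qinv.mulVec z) = z ∧
      Qinv.mulVec (Q.mulVec z) = z := by
  have hav : ∀ e, 0 < (a * v) e := fun e => mul_pos (ha e) (hv e)
  have hLv' : Lv = B * Matrix.diagonal (a * v) * Bᵀ := by
    rw [hLv, Matrix.mul_assoc B, Matrix.diagonal_mul_diagonal]; rfl
  -- images
  have hLvIm : ∀ ξ : Fin n → ℝ, Lv.mulVec ξ
      = B.mulVec ((Matrix.diagonal a * Matrix.diagonal v * Bᵀ).mulVec ξ) := by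
    intro ξ; rw [mulVec_mulVec, hLv]; congr 1; simp [Matrix.mul_assoc]
  have hLIm : ∀ ξ : Fin n → ℝ, L.mulVec ξ
      = B.mulVec ((Matrix.diagonal a * Bᵀ).mulVec ξ) := by
    intro ξ; rw [mulVec_mulVec, hL]; congr 1; simp [Matrix.mul_assoc]
  have key1 : ∀ ξ : Fin n → ℝ, L.mulVec (Ldag.mulVec (Lv.mulVec ξ)) = Lv.mulVec ξ := by
    intro ξ
    calc L.mulVec (Ldag.mulVec (Lv.mulVec ξ))
        = (L * Ldag).mulVec (B.mulVec ((Matrix.diagonal a * Matrix.diagonal v * Bᵀ).mulVec ξ)) := by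
          rw [mulVec_mulVec, hLvIm]
      _ = B.mulVec ((Matrix.diagonal a * Matrix.diagonal v * Bᵀ).mulVec ξ) :=
          proj_fixed n m B a ha hconn L Ldag hL hmp1 hmp3 _
      _ = Lv.mulVec ξ := (hLvIm ξ).symm
  have key2 : ∀ ξ : Fin n → ℝ, Lv.mulVec (Lvdag.mulVec (L.mulVec ξ)) = L.mulVec ξ := by
    intro ξ
    calc Lv.mulVec (Lvdag.mulVec (L.mulVec ξ))
        = (Lv * Lvdag).mulVec (B.mulVec ((Matrix.diagonal a * Bᵀ).mulVec ξ)) := by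
          rw [mulVec_mulVec, hLIm]
      _ = B.mulVec ((Matrix.diagonal a * Bᵀ).mulVec ξ) :=
          proj_fixed n m B (a * v) hav hconn Lv Lvdag hLv' hv1 hv3 _
      _ = L.mulVec ξ := (hLIm ξ).symm
  have cancel1 : ∀ ξ : Fin n → ℝ, Bᵀ.mulVec (Ldag.mulVec (L.mulVec ξ)) = Bᵀ.mulVec ξ := by
    intro ξ
    have h := dag_cancel n m B a ha L Ldag hL hmp1 ξ
    rwa [← mulVec_mulVec] at h
  have cancel2 : ∀ ξ : Fin n → ℝ, Bᵀ.mulVec (Lvdag.mulVec (Lv.mulVec ξ)) = Bᵀ.mulVec ξ := by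
    intro ξ
    have h := dag_cancel n m B (a * v) hav Lv Lvdag hLv' hv1 ξ
    rwa [← mulVec_mulVec] at h
  have hQB : ∀ y : Fin n → ℝ, Q.mulVec (Bᵀ.mulVec y)
      = Bᵀ.mulVec (Ldag.mulVec (Lv.mulVec y)) := by
    intro y
    rw [mulVec_mulVec, mulVec_mulVec, mulVec_mulVec, hQ, hLv]
    congr 1; simp [Matrix.mul_assoc]
  have hQinvB : ∀ y : Fin n → ℝ, Qinv.mulVec (Bᵀ.mulVec y)
      = Bᵀ.mulVec (Lvdag.mulVec (L.mulVec y)) := by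
    intro y
    rw [mulVec_mulVec, mulVec_mulVec, mulVec_mulVec, hQinv, hL]
    congr 1; simp [Matrix.mul_assoc]
  rintro z ⟨ξ, rfl⟩
  refine ⟨?_, ?_, ?_⟩
  · exact ⟨Ldag.mulVec (Lv.mulVec ξ), hQB ξ⟩
  · rw [hQinvB, hQB, key2, cancel1]
  · rw [hQB, hQinvB, key1, cancel2]
end

section
/- Let G be a connected unweighted graph with incidence matrix B and Laplacian L = BBᵀ, and let γ ∈ [0, π/2). For every x ∈ Im(Bᵀ) with ‖x‖₂ ≤ γ, the matrix L_{sinc(x)} = B diag(sinc(x)) Bᵀ satisfies L_{sinc(x)} ⪰ sinc(γ) L in the Loewner order. -/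
open Matrix

/-- The Euclidean (2-)norm of a real vector. -/
noncomputable def norm2 {k : ℕ} (v : Fin k → ℝ) : ℝ := Real.sqrt (∑ i, v i ^ 2)

/-! On `(0, π]`, `sinc t` is the slope of the secant of the concave function `sin` through `0`
and `t`, so it decreases; `sinc` is even, so on `[-γ, γ]` it is bounded below by `sinc γ`.
Hence `diag (sinc x) - sinc γ • 1` has nonnegative entries as soon as `‖x‖∞ ≤ ‖x‖₂ ≤ γ`, and
conjugating this diagonal matrix by `B` gives `B diag (sinc x) Bᵀ - sinc γ • B Bᵀ ⪰ 0`. -/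

theorem sinc_eq_real_sinc : sinc = Real.sinc := rfl

namespace Real

theorem sinc_strictAntiOn : StrictAntiOn sinc (Set.Icc 0 π) := by
  intro s hs t ht hst
  have ht0 : 0 < t := hs.1.trans_lt hst
  rcases hs.1.eq_or_lt with rfl | hs0
  · rw [sinc_zero, sinc_of_ne_zero ht0.ne', div_lt_one ht0]
    exact sin_lt ht0
  · have hsecant := strictConcaveOn_sin_Icc.secant_strict_mono (a := 0)
      ⟨le_rfl, pi_pos.le⟩ hs ht hs0.ne' ht0.ne' hst
    simpa only [sin_zero, sub_zero, ← sinc_of_ne_zero hs0.ne', ← sinc_of_ne_zero ht0.ne']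
      using hsecant

theorem sinc_abs (t : ℝ) : sinc |t| = sinc t := by
  rcases abs_choice t with h | h <;> simp only [h, sinc_neg]

theorem sinc_le_sinc_of_abs_le {s t : ℝ} (hst : |s| ≤ t) (ht : t ≤ π) : sinc t ≤ sinc s := by
  rw [← sinc_abs s]
  exact sinc_strictAntiOn.antitoneOn ⟨abs_nonneg s, hst.trans ht⟩
    ⟨(abs_nonneg s).trans hst, ht⟩ hst

end Real

theorem abs_le_norm2 {k : ℕ} (v : Fin k → ℝ) (i : Fin k) : |v i| ≤ norm2 v :=
  Real.abs_le_sqrt <|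
    Finset.single_le_sum (f := fun j => v j ^ 2) (fun _ _ => sq_nonneg _) (Finset.mem_univ i)

theorem Matrix.posSemidef_mul_diagonal_mul_transpose_sub_smul {ι κ : Type*} [Finite ι]
    [Fintype κ] [DecidableEq κ] (B : Matrix ι κ ℝ) {d : κ → ℝ} {c : ℝ} (hcd : ∀ e, c ≤ d e) :
    (B * diagonal d * Bᵀ - c • (B * Bᵀ)).PosSemidef := by
  have hconj : B * diagonal d * Bᵀ - c • (B * Bᵀ) = B * diagonal (fun e => d e - c) * Bᴴ := by
    rw [← diagonal_sub, Matrix.mul_sub, Matrix.sub_mul, conjTranspose_eq_transpose_of_trivial,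
      ← smul_one_eq_diagonal, Matrix.mul_smul, Matrix.smul_mul, Matrix.mul_one]
  rw [hconj]
  exact (posSemidef_diagonal_iff.mpr fun e => sub_nonneg.mpr (hcd e)).mul_mul_conjTranspose_same B

theorem scaled_laplacian_loewner_bound_general
    (n m : ℕ) (B : Matrix (Fin n) (Fin m) ℝ)
    (γ : ℝ) (hγ : 0 ≤ γ ∧ γ < Real.pi / 2)
    (x : Fin m → ℝ)
    (hxnorm : norm2 x ≤ γ) :
    (B * Matrix.diagonal (fun e => sinc (x e)) * Bᵀ - sinc γ • (B * Bᵀ)).PosSemidef := by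
  have hγπ : γ ≤ Real.pi := by linarith [hγ.2, Real.pi_pos]
  refine B.posSemidef_mul_diagonal_mul_transpose_sub_smul fun e => ?_
  rw [sinc_eq_real_sinc]
  exact Real.sinc_le_sinc_of_abs_le ((abs_le_norm2 x e).trans hxnorm) hγπ

/-- For a connected unweighted graph with incidence matrix `B` and
Laplacian `L = BBᵀ`, and `γ ∈ [0, π/2)`, every `x ∈ Im(Bᵀ)` with `‖x‖₂ ≤ γ` satisfies
`B diag(sinc x) Bᵀ ⪰ sinc(γ) L` in the Loewner order. -/
theorem scaled_laplacian_loewner_bound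
    (n m : ℕ) (B : Matrix (Fin n) (Fin m) ℝ)
    (hconn : ∀ x : Fin n → ℝ, Bᵀ.mulVec x = 0 ↔ ∃ c : ℝ, x = fun _ => c)
    (γ : ℝ) (hγ : 0 ≤ γ ∧ γ < Real.pi / 2)
    (x : Fin m → ℝ) (hx : ∃ ξ : Fin n → ℝ, x = Bᵀ.mulVec ξ)
    (hxnorm : norm2 x ≤ γ) :
    (B * Matrix.diagonal (fun e => sinc (x e)) * Bᵀ - sinc γ • (B * Bᵀ)).PosSemidef :=
  scaled_laplacian_loewner_bound_general n m B γ hγ x hxnorm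
end

section
/- Define g : [1,∞) → ℝ by g(x) = (y + sin y)/2 − x (y − sin y)/2 where y = arccos((x−1)/(x+1)). Then g(1) = 1, g is monotonically decreasing, and lim_{x→∞} g(x) = 0. -/
/-!
`g` is the upper envelope of the lines `ℓ_γ(x) = (γ + sin γ)/2 − x (γ − sin γ)/2`, `γ ∈ [0, π]`.
Writing `c = cos y = (x − 1)/(x + 1)` one has `ℓ_γ(x) = (x + 1)/2 · (sin γ − c γ)`, so the envelope
is attained at `γ = y` by the tangent-line inequality for the concave function `sin` on `[0, π]`.
Each line is nonincreasing in `x` because `sin γ ≤ γ`, hence so is `g`. Finally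
`0 = ℓ_0 ≤ g(x) ≤ (y + sin y)/2`, and `y → arccos 1 = 0` as `x → ∞`.
-/

/-- The function `g(x) = (y + sin y)/2 − x (y − sin y)/2` where `y = arccos((x−1)/(x+1))`. -/
noncomputable def gfun (x : ℝ) : ℝ :=
  (Real.arccos ((x - 1) / (x + 1)) + Real.sin (Real.arccos ((x - 1) / (x + 1)))) / 2 -
    x * ((Real.arccos ((x - 1) / (x + 1)) - Real.sin (Real.arccos ((x - 1) / (x + 1)))) / 2)

open Real Filter Set Topology

theorem ConcaveOn.le_add_mul_sub_of_hasDerivAt {S : Set ℝ} {f : ℝ → ℝ} {x y f' : ℝ}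
    (hf : ConcaveOn ℝ S f) (hx : x ∈ S) (hy : y ∈ S) (hf' : HasDerivAt f f' y) :
    f x ≤ f y + f' * (x - y) := by
  rcases lt_trichotomy x y with hxy | rfl | hyx
  · have h := hf.le_slope_of_hasDerivAt hx hy hxy hf'
    rw [slope_def_field, le_div_iff₀ (sub_pos.2 hxy)] at h
    linarith
  · simp
  · have h := hf.slope_le_of_hasDerivAt hy hx hyx hf'
    rw [slope_def_field, div_le_iff₀ (sub_pos.2 hyx)] at h
    linarith

theorem Real.sin_le_sin_add_cos_mul_sub {x y : ℝ} (hx : x ∈ Icc 0 π) (hy : y ∈ Icc 0 π) :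
    sin x ≤ sin y + cos y * (x - y) :=
  strictConcaveOn_sin_Icc.concaveOn.le_add_mul_sub_of_hasDerivAt hx hy (hasDerivAt_sin y)

noncomputable def gLine (γ x : ℝ) : ℝ := (γ + sin γ) / 2 - x * ((γ - sin γ) / 2)

theorem gfun_eq_gLine (x : ℝ) : gfun x = gLine (arccos ((x - 1) / (x + 1))) x := rfl

theorem gLine_eq (γ x : ℝ) : gLine γ x = ((x + 1) * sin γ - (x - 1) * γ) / 2 := by
  unfold gLine; ring

theorem gLine_antitone {γ : ℝ} (hγ : 0 ≤ γ) : Antitone (gLine γ) := by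
  intro a b hab
  have := sin_le hγ
  unfold gLine
  nlinarith

theorem gLine_le_gfun {γ x : ℝ} (hγ : γ ∈ Icc 0 π) (hx : 0 ≤ x) : gLine γ x ≤ gfun x := by
  set c := (x - 1) / (x + 1) with hc
  have hx1 : 0 < x + 1 := by linarith
  have hc_mem : c ∈ Icc (-1) 1 := by
    constructor
    · rw [hc, le_div_iff₀ hx1]; linarith
    · rw [hc, div_le_one hx1]; linarith
  set y := arccos c
  have hxc : x - 1 = (x + 1) * cos y := by
    rw [cos_arccos hc_mem.1 hc_mem.2, hc]; field_simp
  have htangent := sin_le_sin_add_cos_mul_sub hγ ⟨arccos_nonneg c, arccos_le_pi c⟩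
  rw [gfun_eq_gLine, ← hc, gLine_eq, gLine_eq, hxc]
  linear_combination (mul_le_mul_of_nonneg_left htangent hx1.le) / 2

theorem gfun_nonneg {x : ℝ} (hx : 0 ≤ x) : 0 ≤ gfun x := by
  simpa [gLine] using gLine_le_gfun ⟨le_rfl, pi_pos.le⟩ hx

theorem gfun_le_arccos_add_sin_div_two {x : ℝ} (hx : 0 ≤ x) :
    gfun x ≤ (arccos ((x - 1) / (x + 1)) + sin (arccos ((x - 1) / (x + 1)))) / 2 := by
  have := sin_le (arccos_nonneg ((x - 1) / (x + 1)))
  rw [gfun]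
  nlinarith

theorem antitoneOn_gfun : AntitoneOn gfun (Ici 0) := by
  intro a ha b _ hab
  set y := arccos ((b - 1) / (b + 1))
  calc gfun b = gLine y b := gfun_eq_gLine b
    _ ≤ gLine y a := gLine_antitone (arccos_nonneg _) hab
    _ ≤ gfun a := gLine_le_gfun ⟨arccos_nonneg _, arccos_le_pi _⟩ ha

theorem tendsto_arccos_sub_one_div_add_one :
    Tendsto (fun x : ℝ => arccos ((x - 1) / (x + 1))) atTop (𝓝 0) := by
  have htail : Tendsto (fun x : ℝ => 2 / (x + 1)) atTop (𝓝 0) :=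
    tendsto_const_nhds.div_atTop (tendsto_atTop_add_const_right _ 1 tendsto_id)
  have hfrac : Tendsto (fun x : ℝ => (x - 1) / (x + 1)) atTop (𝓝 1) := by
    have h := (tendsto_const_nhds (x := (1 : ℝ))).sub htail
    rw [sub_zero] at h
    refine h.congr' ?_
    filter_upwards [eventually_gt_atTop (-1 : ℝ)] with x hx
    have : x + 1 ≠ 0 := by linarith
    field_simp
    ring
  rw [← arccos_one]
  exact (continuous_arccos.tendsto 1).comp hfrac

/-- `g(1) = 1`, `g` is monotonically decreasing on `[1, ∞)`, and
`g(x) → 0` as `x → ∞`. -/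
theorem gfun_properties :
    gfun 1 = 1 ∧
    AntitoneOn gfun (Set.Ici 1) ∧
    Filter.Tendsto gfun Filter.atTop (nhds 0) := by
  refine ⟨?_, antitoneOn_gfun.mono (Ici_subset_Ici.2 zero_le_one), ?_⟩
  · norm_num [gfun]
    ring
  · have hupper : Tendsto (fun x : ℝ => (arccos ((x - 1) / (x + 1)) +
        sin (arccos ((x - 1) / (x + 1)))) / 2) atTop (𝓝 0) := by
      have hsin := (continuous_sin.tendsto 0).comp tendsto_arccos_sub_one_div_add_one
      simpa using (tendsto_arccos_sub_one_div_add_one.add hsin).div_const 2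
    refine tendsto_of_tendsto_of_tendsto_of_le_of_le' tendsto_const_nhds hupper ?_ ?_
    · filter_upwards [eventually_ge_atTop 0] with x hx using gfun_nonneg hx
    · filter_upwards [eventually_ge_atTop 0] with x hx using gfun_le_arccos_add_sin_div_two hx
end

section
/- Let G be a connected weighted graph with incidence matrix B, weight matrix 𝒜, Laplacian L, cutset projection 𝒫, and ω ∈ 1ₙ^⊥. A vector x* ∈ 1ₙ^⊥ satisfies the nodal balance equation ω = B𝒜 sin(Bᵀ x*) if and only if it satisfies the edge balance equation Bᵀ L† ω = 𝒫 sin(Bᵀ x*). -/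
open Matrix

/-- For a connected weighted graph with incidence matrix `B`, weight
matrix `𝒜`, Laplacian `L = B𝒜Bᵀ` with Moore–Penrose pseudoinverse `L†`, cutset projection
`𝒫 = Bᵀ L† B𝒜`, and `ω ⊥ 1ₙ`, a vector `x* ∈ 1ₙ^⊥` satisfies the nodal balance equation
`ω = B𝒜 sin(Bᵀ x*)` if and only if it satisfies the edge balance equation
`Bᵀ L† ω = 𝒫 sin(Bᵀ x*)`. -/
theorem nodal_iff_edge_balance
    (n m : ℕ) (B : Matrix (Fin n) (Fin m) ℝ) (a : Fin m → ℝ)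
    (ha : ∀ e, 0 < a e)
    (hconn : ∀ x : Fin n → ℝ, Bᵀ.mulVec x = 0 ↔ ∃ c : ℝ, x = fun _ => c)
    (L Ldag : Matrix (Fin n) (Fin n) ℝ)
    (hL : L = B * Matrix.diagonal a * Bᵀ)
    (hmp1 : L * Ldag * L = L) (hmp2 : Ldag * L * Ldag = Ldag)
    (hmp3 : (L * Ldag)ᵀ = L * Ldag) (hmp4 : (Ldag * L)ᵀ = Ldag * L)
    (P : Matrix (Fin m) (Fin m) ℝ)
    (hP : P = Bᵀ * Ldag * B * Matrix.diagonal a)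
    (ω : Fin n → ℝ) (hω : ∑ i, ω i = 0)
    (xstar : Fin n → ℝ) (hxstar : ∑ i, xstar i = 0) :
    ω = (B * Matrix.diagonal a).mulVec (fun e => Real.sin (Bᵀ.mulVec xstar e)) ↔
    (Bᵀ * Ldag).mulVec ω = P.mulVec (fun e => Real.sin (Bᵀ.mulVec xstar e)) := by
  set D : Matrix (Fin m) (Fin m) ℝ := Matrix.diagonal a with hD
  set s : Fin m → ℝ := fun e => Real.sin (Bᵀ.mulVec xstar e) with hs
  -- the all-ones vector is in the kernel of Bᵀ
  have h1 : Bᵀ.mulVec (fun _ => (1:ℝ)) = 0 := (hconn _).mpr ⟨1, rfl⟩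
  -- the kernel of L consists of constant vectors
  have hker : ∀ x : Fin n → ℝ, L.mulVec x = 0 → ∃ c : ℝ, x = fun _ => c := by
    intro x hx
    apply (hconn x).mp
    have h0 : x ⬝ᵥ L.mulVec x = 0 := by rw [hx, dotProduct_zero]
    have hexp : x ⬝ᵥ L.mulVec x = ∑ e, a e * (Bᵀ.mulVec x e)^2 := by
      have hLx : L.mulVec x = B.mulVec (D.mulVec (Bᵀ.mulVec x)) := by
        rw [hL, Matrix.mulVec_mulVec, Matrix.mulVec_mulVec]
      rw [hLx, Matrix.dotProduct_mulVec, ← Matrix.mulVec_transpose, hD]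
      simp only [dotProduct, Matrix.mulVec_diagonal]
      exact Finset.sum_congr rfl fun e _ => by ring
    have hterm : ∀ e ∈ Finset.univ, (0:ℝ) ≤ a e * (Bᵀ.mulVec x e)^2 := fun e _ =>
      mul_nonneg (ha e).le (sq_nonneg _)
    have hz := (Finset.sum_eq_zero_iff_of_nonneg hterm).mp (by rw [← hexp]; exact h0)
    funext e
    have he := hz e (Finset.mem_univ e)
    have h2 : (Bᵀ.mulVec x e)^2 = 0 := by
      rcases mul_eq_zero.mp he with h | h
      · exact absurd h (ha e).ne'
      · exact h
    simpa using pow_eq_zero_iff (n := 2) (by norm_num) |>.mp h2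
  -- the key projection property: L L† fixes mean-zero vectors
  have hfix : ∀ v : Fin n → ℝ, (∑ i, v i) = 0 → (L * Ldag).mulVec v = v := by
    intro v hv
    have hsymm : (1 - L * Ldag)ᵀ = 1 - L * Ldag := by
      rw [Matrix.transpose_sub, Matrix.transpose_one, hmp3]
    have hLsym : Lᵀ = L := by
      rw [hL, hD]
      rw [Matrix.transpose_mul, Matrix.transpose_mul, Matrix.transpose_transpose,
        Matrix.diagonal_transpose, Matrix.mul_assoc]
    have hLE : L * (1 - L * Ldag) = 0 := by
      have hEL : (1 - L * Ldag) * L = 0 := by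
        rw [Matrix.sub_mul, Matrix.one_mul, hmp1, sub_self]
      calc L * (1 - L * Ldag) = (((1 - L * Ldag)ᵀ) * Lᵀ)ᵀ := by
              rw [Matrix.transpose_mul, Matrix.transpose_transpose,
                Matrix.transpose_transpose]
        _ = 0 := by rw [hsymm, hLsym, hEL, Matrix.transpose_zero]
    have hcol : ∀ j, ∃ c : ℝ, (fun i => (1 - L * Ldag) i j) = fun _ => c := by
      intro j
      apply hker
      funext i
      have h0 : (L * (1 - L * Ldag)) i j = 0 := by rw [hLE]; rfl
      simpa [Matrix.mul_apply, Matrix.mulVec, dotProduct] using h0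
    have hE0 : (1 - L * Ldag).mulVec v = 0 := by
      funext i
      obtain ⟨c, hc⟩ := hcol i
      have hrow : ∀ j, (1 - L * Ldag) i j = c := by
        intro j
        have h1' : (1 - L * Ldag) i j = (1 - L * Ldag) j i := by
          have := congrFun (congrFun hsymm i) j
          rw [Matrix.transpose_apply] at this
          exact this.symm
        rw [h1']
        exact congrFun hc j
      have heq : (1 - L * Ldag).mulVec v i = ∑ j, c * v j := by
        simp only [Matrix.mulVec, dotProduct]
        exact Finset.sum_congr rfl fun j _ => by rw [hrow j]
      rw [heq, ← Finset.mul_sum, hv, mul_zero]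
      rfl
    have h := Matrix.sub_mulVec (1 : Matrix (Fin n) (Fin n) ℝ) (L * Ldag) v
    rw [hE0, Matrix.one_mulVec] at h
    exact (sub_eq_zero.mp h.symm).symm
  -- the vector B𝒜 sin(Bᵀ x*) has zero sum
  have hsumBD : ∑ i, ((B * D).mulVec s) i = 0 := by
    have h2 : ∑ i, ((B * D).mulVec s) i = (fun _ => (1:ℝ)) ⬝ᵥ (B * D).mulVec s := by
      simp [dotProduct]
    have h1' : (fun _ => (1:ℝ)) ᵥ* B = 0 := by
      rw [← Matrix.mulVec_transpose]; exact h1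
    rw [h2, Matrix.dotProduct_mulVec, ← Matrix.vecMul_vecMul, h1']
    simp
  constructor
  · intro h
    rw [h, hP, Matrix.mulVec_mulVec]
    congr 1
    rw [Matrix.mul_assoc (Bᵀ * Ldag) B D, ← Matrix.mul_assoc]
  · intro h
    have h2 := congrArg (fun w => (B * D).mulVec w) h
    simp only [Matrix.mulVec_mulVec] at h2
    have hBDL : B * D * (Bᵀ * Ldag) = L * Ldag := by
      rw [← Matrix.mul_assoc, ← hL]
    have hBDP : B * D * P = L * Ldag * (B * D) := by
      rw [hP]
      simp only [← Matrix.mul_assoc]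
      rw [hL]
    rw [hBDL, hBDP, hfix ω hω, ← Matrix.mulVec_mulVec, hfix _ hsumBD] at h2
    exact h2
end
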